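/- The curvature of the curve {(x,y) ∈ R² : e^x + e^y = 1}, parametrized by x = 2 log(cos θ), y = 2 log(sin θ), θ ∈ (0, π/2), equals c_∞(θ) = (sin θ cos θ)² / [(cos θ)⁴ + (sin θ)⁴]^{3/2}, and this function is strictly increasing on (0, π/4). -/

import Mathlib

open Real Filter Topology

/-! With `s = sin θ`, `c = cos θ` one has `x' = -2s/c`, `y' = 2c/s`, `x'' = -2/c²`, `y'' = -2/s²`,
so `x'y'' - x''y' = 8/(sc)` and `x'² + y'² = (2/(sc))² (c⁴ + s⁴)`, which gives `c_∞`.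
Since `c⁴ + s⁴ = 1 - sin²(2θ)/2`, `c_∞ = u/4 / (1 - u/2)^{3/2}` with `u = sin²(2θ)`,
an increasing function of `u ∈ [0, 1]`, and `u` increases on `[0, π/4]`. -/

/-- Curvature of the `p = ∞` (logarithmic) embedding. -/
noncomputable def cInf (θ : ℝ) : ℝ :=
  (Real.sin θ * Real.cos θ) ^ 2 /
    ((Real.cos θ) ^ 4 + (Real.sin θ) ^ 4) ^ ((3 : ℝ) / 2)

noncomputable def planeCurvature (x y : ℝ → ℝ) (θ : ℝ) : ℝ :=
  |deriv x θ * deriv (deriv y) θ - deriv (deriv x) θ * deriv y θ| /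
    (deriv x θ ^ 2 + deriv y θ ^ 2) ^ ((3 : ℝ) / 2)

section LogOfSquare

variable {g g' : ℝ → ℝ} (hg : ∀ t, HasDerivAt g (g' t) t)
include hg

lemma hasDerivAt_two_mul_log {t : ℝ} (ht : g t ≠ 0) :
    HasDerivAt (fun t => 2 * log (g t)) (2 * g' t / g t) t := by
  simpa only [mul_div_assoc] using ((hg t).log ht).const_mul 2

/-- `(2 log g)'' = 2 (g g'' - g'²) / g² = -2 (g² + g'²) / g²`, which is `-2 / g²` for
`g = cos` and `g = sin`. -/
lemma deriv_deriv_two_mul_log {θ : ℝ} (hg' : HasDerivAt g' (-g θ) θ) (hθ : g θ ≠ 0)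
    (hpyth : g θ ^ 2 + g' θ ^ 2 = 1) :
    deriv (deriv fun t => 2 * log (g t)) θ = -2 / g θ ^ 2 := by
  have hderiv : deriv (fun t => 2 * log (g t)) =ᶠ[𝓝 θ] fun t => 2 * g' t / g t := by
    filter_upwards [(hg θ).continuousAt.eventually_ne hθ] with t ht
      using (hasDerivAt_two_mul_log hg ht).deriv
  rw [hderiv.deriv_eq, ((hg'.const_mul 2).fun_div (hg θ) hθ).deriv]
  field_simp
  linear_combination -hpyth

end LogOfSquare

lemma sq_mul_rpow_three_halves {k A : ℝ} (hk : 0 ≤ k) (hA : 0 ≤ A) :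
    (k ^ 2 * A) ^ ((3 : ℝ) / 2) = k ^ 3 * A ^ ((3 : ℝ) / 2) := by
  rw [mul_rpow (by positivity) hA, ← rpow_natCast k 2, ← rpow_mul hk, ← rpow_natCast k 3]
  norm_num

lemma planeCurvature_two_mul_log_cos_sin {θ : ℝ} (hθ : θ ∈ Set.Ioo 0 (π / 2)) :
    planeCurvature (fun t => 2 * log (cos t)) (fun t => 2 * log (sin t)) θ = cInf θ := by
  have hs : 0 < sin θ := sin_pos_of_pos_of_lt_pi hθ.1 (by linarith [hθ.2, pi_pos])
  have hc : 0 < cos θ := cos_pos_of_mem_Ioo ⟨by linarith [hθ.1, pi_pos], hθ.2⟩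
  have hcos : ∀ t, HasDerivAt cos (-sin t) t := hasDerivAt_cos
  have hsin : ∀ t, HasDerivAt sin (cos t) t := hasDerivAt_sin
  unfold planeCurvature cInf
  rw [(hasDerivAt_two_mul_log hcos hc.ne').deriv, (hasDerivAt_two_mul_log hsin hs.ne').deriv,
    deriv_deriv_two_mul_log hcos (hasDerivAt_sin θ).neg hc.ne' (by rw [neg_sq, cos_sq_add_sin_sq]),
    deriv_deriv_two_mul_log hsin (hasDerivAt_cos θ) hs.ne' (sin_sq_add_cos_sq θ)]
  have hnum : 2 * -sin θ / cos θ * (-2 / sin θ ^ 2) - -2 / cos θ ^ 2 * (2 * cos θ / sin θ) =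
      8 / (sin θ * cos θ) := by
    field_simp; ring
  have hden : (2 * -sin θ / cos θ) ^ 2 + (2 * cos θ / sin θ) ^ 2 =
      (2 / (sin θ * cos θ)) ^ 2 * (cos θ ^ 4 + sin θ ^ 4) := by
    field_simp; ring
  rw [hnum, hden, abs_of_pos (by positivity),
    sq_mul_rpow_three_halves (by positivity) (by positivity)]
  have hA : 0 < (cos θ ^ 4 + sin θ ^ 4) ^ ((3 : ℝ) / 2) := rpow_pos_of_pos (by positivity) _
  field_simp
  norm_num

lemma cInf_eq_sin_two_mul (θ : ℝ) :
    cInf θ = sin (2 * θ) ^ 2 / 4 / (1 - sin (2 * θ) ^ 2 / 2) ^ ((3 : ℝ) / 2) := by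
  have hnum : sin (2 * θ) ^ 2 / 4 = (sin θ * cos θ) ^ 2 := by rw [sin_two_mul]; ring
  have hden : 1 - sin (2 * θ) ^ 2 / 2 = cos θ ^ 4 + sin θ ^ 4 := by
    rw [sin_two_mul]; linear_combination (-(sin θ ^ 2 + cos θ ^ 2) - 1) * sin_sq_add_cos_sq θ
  rw [hnum, hden, cInf]

lemma strictMonoOn_div_rpow_three_halves :
    StrictMonoOn (fun u : ℝ => u / 4 / (1 - u / 2) ^ ((3 : ℝ) / 2)) (Set.Ico 0 2) := by
  intro a ha b hb hab
  have hDb : 0 < (1 - b / 2) ^ ((3 : ℝ) / 2) := rpow_pos_of_pos (by linarith [hb.2]) _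
  have hDa : 0 < (1 - a / 2) ^ ((3 : ℝ) / 2) := rpow_pos_of_pos (by linarith [ha.2]) _
  calc a / 4 / (1 - a / 2) ^ ((3 : ℝ) / 2)
      < b / 4 / (1 - a / 2) ^ ((3 : ℝ) / 2) := by gcongr
    _ ≤ b / 4 / (1 - b / 2) ^ ((3 : ℝ) / 2) := by
        gcongr
        · linarith [ha.1]
        · linarith [hb.2]

lemma strictMonoOn_sin_two_mul_sq :
    StrictMonoOn (fun θ => sin (2 * θ) ^ 2) (Set.Icc 0 (π / 4)) := by
  intro a ha b hb hab
  have hsin : sin (2 * a) < sin (2 * b) :=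
    strictMonoOn_sin ⟨by linarith [ha.1, pi_pos], by linarith [ha.2]⟩
      ⟨by linarith [hb.1, pi_pos], by linarith [hb.2]⟩ (by linarith)
  have ha0 : 0 ≤ sin (2 * a) :=
    sin_nonneg_of_nonneg_of_le_pi (by linarith [ha.1]) (by linarith [ha.2, pi_pos])
  exact pow_lt_pow_left₀ hsin ha0 two_ne_zero

lemma strictMonoOn_cInf : StrictMonoOn cInf (Set.Icc 0 (π / 4)) := by
  have hmaps : Set.MapsTo (fun θ => sin (2 * θ) ^ 2) (Set.Icc 0 (π / 4)) (Set.Ico 0 2) :=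
    fun θ _ => ⟨sq_nonneg _, by linarith [sin_sq_le_one (2 * θ)]⟩
  have hcomp := strictMonoOn_div_rpow_three_halves.comp strictMonoOn_sin_two_mul_sq hmaps
  simpa only [Function.comp_def, ← cInf_eq_sin_two_mul] using hcomp

/-- The curvature of the curve `eˣ + eʸ = 1`, parametrized by `x = 2 log (cos θ)`,
`y = 2 log (sin θ)`, equals `c_∞`, which is strictly increasing on `(0, π/4)`. -/
theorem curvature_log_embedding :
    (∀ θ ∈ Set.Ioo 0 (π / 2),
        |deriv (fun t => 2 * Real.log (Real.cos t)) θ *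
            deriv (deriv (fun t => 2 * Real.log (Real.sin t))) θ -
          deriv (deriv (fun t => 2 * Real.log (Real.cos t))) θ *
            deriv (fun t => 2 * Real.log (Real.sin t)) θ| /
          ((deriv (fun t => 2 * Real.log (Real.cos t)) θ) ^ 2 +
            (deriv (fun t => 2 * Real.log (Real.sin t)) θ) ^ 2) ^ ((3 : ℝ) / 2) =
        cInf θ) ∧
    StrictMonoOn cInf (Set.Ioo 0 (π / 4)) :=
  ⟨fun _ hθ => planeCurvature_two_mul_log_cos_sin hθ,
    strictMonoOn_cInf.mono Set.Ioo_subset_Icc_self⟩
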